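/- arXiv:1504.02651 — 2 statements merged into one kernel-verified Lean document; each statement's English description precedes it below -/
import Mathlib

section
/- In the saturated automaton produced by the abstract saturation algorithm for a pushdown system P, there is a transition (q, a, q') with q, q' control states of P if and only if P admits a run from configuration (q, a) to configuration (q', ε). -/
variable {Q Γ : Type}

/-- One step of a pushdown system with push rules `push` and pop rules `pop`:
a push rule `(q,a,q',b,c)` rewrites `(q, a·w)` to `(q', b·c·w)`, and a pop rule
`(q,a,q')` rewrites `(q, a·w)` to `(q', w)`. -/
def PdsStep (push : Set (Q × Γ × Q × Γ × Γ)) (pop : Set (Q × Γ × Q))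
    (c c' : Q × List Γ) : Prop :=
  (∃ q a q' b cc w, c = (q, a :: w) ∧ c' = (q', b :: cc :: w) ∧
    (q, a, q', b, cc) ∈ push) ∨
  (∃ q a q' w, c = (q, a :: w) ∧ c' = (q', w) ∧ (q, a, q') ∈ pop)

/-- The `forced` transitions of the saturation algorithm. -/
def forced (push : Set (Q × Γ × Q × Γ × Γ)) (α : Set (Q × Γ × Q)) :
    Set (Q × Γ × Q) :=
  {t | ∃ b c q'' q''', (t.1, t.2.1, q'', b, c) ∈ push ∧
    (q'', b, q''') ∈ α ∧ (q''', c, t.2.2) ∈ α}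

/-- The saturated transition relation: the least `α ⊇ δ ∪ pop` closed under
`forced`. -/
def saturate (push : Set (Q × Γ × Q × Γ × Γ)) (pop : Set (Q × Γ × Q))
    (δ : Set (Q × Γ × Q)) : Set (Q × Γ × Q) :=
  ⋂₀ {α | δ ∪ pop ⊆ α ∧ forced push α ⊆ α}

/-- `Reads α q w q'`: the automaton with transitions `α` can read `w` from `q` to `q'`. -/
inductive Reads (α : Set (Q × Γ × Q)) : Q → List Γ → Q → Prop
  | nil (q : Q) : Reads α q [] q
  | cons {q p r : Q} {a : Γ} {w : List Γ} (h : (q, a, p) ∈ α) (h2 : Reads α p w r) :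
      Reads α q (a :: w) r

lemma sat_pop {push : Set (Q × Γ × Q × Γ × Γ)} {pop : Set (Q × Γ × Q)}
    {δ : Set (Q × Γ × Q)} : pop ⊆ saturate push pop δ := by
  intro t ht α hα
  exact hα.1 (Or.inr ht)

lemma sat_forced {push : Set (Q × Γ × Q × Γ × Γ)} {pop : Set (Q × Γ × Q)}
    {δ : Set (Q × Γ × Q)} :
    forced push (saturate push pop δ) ⊆ saturate push pop δ := by
  intro t ht α hα
  obtain ⟨b, c, q'', q''', h1, h2, h3⟩ := ht
  exact hα.2 ⟨b, c, q'', q''', h1, h2 α hα, h3 α hα⟩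

lemma step_append {push : Set (Q × Γ × Q × Γ × Γ)} {pop : Set (Q × Γ × Q)}
    {c c' : Q × List Γ} (h : PdsStep push pop c c') (u : List Γ) :
    PdsStep push pop (c.1, c.2 ++ u) (c'.1, c'.2 ++ u) := by
  rcases h with ⟨q, a, q', b, cc, w, rfl, rfl, hr⟩ | ⟨q, a, q', w, rfl, rfl, hr⟩
  · exact Or.inl ⟨q, a, q', b, cc, w ++ u, rfl, rfl, hr⟩
  · exact Or.inr ⟨q, a, q', w ++ u, rfl, rfl, hr⟩

lemma reach_append {push : Set (Q × Γ × Q × Γ × Γ)} {pop : Set (Q × Γ × Q)}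
    {c c' : Q × List Γ} (h : Relation.ReflTransGen (PdsStep push pop) c c')
    (u : List Γ) :
    Relation.ReflTransGen (PdsStep push pop) (c.1, c.2 ++ u) (c'.1, c'.2 ++ u) := by
  induction h with
  | refl => exact Relation.ReflTransGen.refl
  | tail _ hstep ih => exact ih.tail (step_append hstep u)

/-- In the saturated automaton there is a transition `(q, a, q')` between
control states of the pushdown system `P` iff `P` admits a run from
configuration `(q, a)` to configuration `(q', ε)`. -/
theorem saturation_correctness
    (P : Set Q) (push : Set (Q × Γ × Q × Γ × Γ)) (pop : Set (Q × Γ × Q))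
    (δ : Set (Q × Γ × Q))
    (hpush : ∀ t ∈ push, t.1 ∈ P ∧ t.2.2.1 ∈ P)
    (hpop : ∀ t ∈ pop, t.1 ∈ P ∧ t.2.2 ∈ P)
    (hδ : ∀ t ∈ δ, t.2.2 ∉ P)
    (q q' : Q) (hq : q ∈ P) (hq' : q' ∈ P) (a : Γ) :
    (q, a, q') ∈ saturate push pop δ ↔
      Relation.ReflTransGen (PdsStep push pop) (q, [a]) (q', []) := by
  constructor
  · -- soundness
    intro hsat
    -- no step is possible from a state outside P
    have nostep : ∀ (p : Q) (w : List Γ) (c : Q × List Γ),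
        p ∉ P → ¬ PdsStep push pop (p, w) c := by
      rintro p w c hp (⟨q1, a1, q1', b, cc, w1, he, _, hr⟩ | ⟨q1, a1, q1', w1, he, _, hr⟩)
      · injection he with h1 _; subst h1; exact hp (hpush _ hr).1
      · injection he with h1 _; subst h1; exact hp (hpop _ hr).1
    set A : Set (Q × Γ × Q) :=
      {t | t.2.2 ∈ P → Relation.ReflTransGen (PdsStep push pop) (t.1, [t.2.1]) (t.2.2, [])}
      with hA
    have hmem : A ∈ {α | δ ∪ pop ⊆ α ∧ forced push α ⊆ α} := by
      constructor
      · rintro ⟨p, b, r⟩ (hd | hp)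
        · intro hr; exact absurd hr (hδ _ hd)
        · intro _
          exact Relation.ReflTransGen.single (Or.inr ⟨p, b, r, [], rfl, rfl, hp⟩)
      · rintro ⟨p, b, r⟩ ⟨b1, c1, q'', q''', hr, h2, h3⟩ hrP
        have h3' := h3 hrP
        -- q''' must be in P, else the run from (q''', [c1]) cannot start
        have hq''' : q''' ∈ P := by
          by_contra hn
          rcases (Relation.ReflTransGen.cases_head h3') with heq | ⟨c, hstep, _⟩
          · simp at heq
          · exact nostep _ _ _ hn hstep
        have h2' := h2 hq'''
        have step1 : PdsStep push pop (p, [b]) (q'', [b1, c1]) :=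
          Or.inl ⟨p, b, q'', b1, c1, [], rfl, rfl, hr⟩
        have r2 : Relation.ReflTransGen (PdsStep push pop) (q'', [b1, c1]) (q''', [c1]) := by
          simpa using reach_append h2' [c1]
        exact (Relation.ReflTransGen.head step1 r2).trans h3'
    exact hsat A hmem hq'
  · -- completeness
    intro hrun
    have key : ∀ c : Q × List Γ,
        Relation.ReflTransGen (PdsStep push pop) c (q', []) →
        Reads (saturate push pop δ) c.1 c.2 q' := by
      intro c hc
      induction hc using Relation.ReflTransGen.head_induction_on with
      | refl => exact Reads.nil q'
      | head hstep _ ih =>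
        rcases hstep with ⟨q1, a1, q1', b, cc, w, rfl, he', hr⟩ |
            ⟨q1, a1, q1', w, rfl, he', hr⟩
        · subst he'
          rcases ih with _ | ⟨h1, h2⟩
          rcases h2 with _ | ⟨h2, h3⟩
          exact Reads.cons (sat_forced ⟨b, cc, q1', _, hr, h1, h2⟩) h3
        · subst he'
          exact Reads.cons (sat_pop hr) ih
    have := key (q, [a]) hrun
    rcases this with _ | ⟨h1, h2⟩
    cases h2
    exact h1
end

section
/- Preservation of regularity via saturation: let P be a pushdown system and A an NFA over the stack alphabet with states Q ⊇ P and no transitions entering states of P, recognizing from each state p ∈ P the set L_P(A) of configurations (p,w) with w accepted from p. Then the NFA B obtained as the least fixpoint of δ' = δ ∪ ρ^pop ∪ forced(δ') recognizes exactly the backward reachability set: L_P(B) = { c : c →* c' for some c' ∈ L_P(A) }. -/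
variable {Q Γ : Type}

/-- Acceptance of a word from a state in an NFA with transitions `δ` and final
states `F`. -/
def Accepts (δ : Set (Q × Γ × Q)) (F : Set Q) : Q → List Γ → Prop
  | q, [] => q ∈ F
  | q, a :: w => ∃ q', (q, a, q') ∈ δ ∧ Accepts δ F q' w

/-! ### auxiliary lemmas -/

lemma subset_saturate {push : Set (Q × Γ × Q × Γ × Γ)} {pop δ : Set (Q × Γ × Q)} :
    δ ∪ pop ⊆ saturate push pop δ := fun t ht α hα => hα.1 ht

lemma forced_saturate {push : Set (Q × Γ × Q × Γ × Γ)} {pop δ : Set (Q × Γ × Q)} :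
    forced push (saturate push pop δ) ⊆ saturate push pop δ := by
  intro t ht α hα
  obtain ⟨b, c, q'', q''', h1, h2, h3⟩ := ht
  exact hα.2 ⟨b, c, q'', q''', h1, h2 α hα, h3 α hα⟩

lemma saturate_le {push : Set (Q × Γ × Q × Γ × Γ)} {pop δ α : Set (Q × Γ × Q)}
    (h1 : δ ∪ pop ⊆ α) (h2 : forced push α ⊆ α) : saturate push pop δ ⊆ α :=
  fun t ht => ht α ⟨h1, h2⟩

/-- custom induction principle for saturate -/
lemma saturate_ind {push : Set (Q × Γ × Q × Γ × Γ)} {pop δ : Set (Q × Γ × Q)}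
    (C : Q × Γ × Q → Prop)
    (hbase : ∀ t ∈ δ ∪ pop, C t)
    (hstep : ∀ t, t ∈ forced push (saturate push pop δ ∩ {t | C t}) → C t) :
    ∀ t ∈ saturate push pop δ, C t := by
  intro t ht
  have : saturate push pop δ ⊆ saturate push pop δ ∩ {t | C t} := by
    apply saturate_le
    · intro t ht; exact ⟨subset_saturate ht, hbase t ht⟩
    · intro t ht
      refine ⟨forced_saturate ?_, hstep t ht⟩
      obtain ⟨b, c, q'', q''', h1, h2, h3⟩ := ht
      exact ⟨b, c, q'', q''', h1, h2.1, h3.1⟩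
  exact (this ht).2

lemma Accepts_mono {δ δ' : Set (Q × Γ × Q)} {F : Set Q} (h : δ ⊆ δ') :
    ∀ {q w}, Accepts δ F q w → Accepts δ' F q w := by
  intro q w
  induction w generalizing q with
  | nil => exact id
  | cons a w ih => rintro ⟨q', hq', hacc⟩; exact ⟨q', h hq', ih hacc⟩

/-- path in automaton -/
def PathP (δ : Set (Q × Γ × Q)) (q : Q) (u : List Γ) (q' : Q) : Prop :=
  Accepts δ {q'} q u

lemma PathP.refl {δ : Set (Q × Γ × Q)} (q : Q) : PathP δ q [] q := rfl

lemma PathP_accept {δ : Set (Q × Γ × Q)} {F : Set Q} {p q : Q} {u w : List Γ}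
    (h : PathP δ p u q) (hacc : Accepts δ F q w) : Accepts δ F p (u ++ w) := by
  induction u generalizing p with
  | nil => cases h; exact hacc
  | cons a u ih => obtain ⟨q', hq', hp⟩ := h; exact ⟨q', hq', ih hp⟩

lemma PathP_snoc {δ : Set (Q × Γ × Q)} {p q q' : Q} {u : List Γ} {c : Γ}
    (h : PathP δ p u q) (hc : (q, c, q') ∈ δ) : PathP δ p (u ++ [c]) q' := by
  induction u generalizing p with
  | nil => cases h; exact ⟨q', hc, rfl⟩
  | cons a u ih => obtain ⟨q'', hq'', hp⟩ := h; exact ⟨q'', hq'', ih hp⟩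

lemma PathP_last_notP {P : Set Q} {δ : Set (Q × Γ × Q)}
    (hδ : ∀ t ∈ δ, t.2.2 ∉ P) {p q : Q} {a : Γ} {u : List Γ}
    (h : PathP δ p (a :: u) q) : q ∉ P := by
  induction u generalizing p a with
  | nil => obtain ⟨q', hq', hp⟩ := h; cases hp; exact hδ _ hq'
  | cons b u ih => obtain ⟨q', hq', hp⟩ := h; exact ih hp

/-- transitions of the saturated automaton whose source is not in `P` are
original transitions. -/
lemma saturate_notP {P : Set Q} {push : Set (Q × Γ × Q × Γ × Γ)}
    {pop δ : Set (Q × Γ × Q)}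
    (hpush : ∀ t ∈ push, t.1 ∈ P ∧ t.2.2.1 ∈ P)
    (hpop : ∀ t ∈ pop, t.1 ∈ P ∧ t.2.2 ∈ P) :
    ∀ t ∈ saturate push pop δ, t.1 ∉ P → t ∈ δ := by
  have : saturate push pop δ ⊆ δ ∪ {t | t.1 ∈ P} := by
    apply saturate_le
    · rintro t (ht | ht)
      · exact Or.inl ht
      · exact Or.inr (hpop t ht).1
    · rintro t ⟨b, c, q'', q''', h1, -, -⟩
      exact Or.inr (hpush _ h1).1
  intro t ht hP
  rcases this ht with h | h
  · exact h
  · exact absurd h hP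

/-- from a state outside `P`, acceptance in the saturated automaton coincides
with acceptance in the original one. -/
lemma accepts_saturate_notP {P : Set Q} {push : Set (Q × Γ × Q × Γ × Γ)}
    {pop δ : Set (Q × Γ × Q)} {F : Set Q}
    (hpush : ∀ t ∈ push, t.1 ∈ P ∧ t.2.2.1 ∈ P)
    (hpop : ∀ t ∈ pop, t.1 ∈ P ∧ t.2.2 ∈ P)
    (hδ : ∀ t ∈ δ, t.2.2 ∉ P) :
    ∀ {w q}, q ∉ P → Accepts (saturate push pop δ) F q w → Accepts δ F q w := by
  intro w
  induction w with
  | nil => exact fun _ h => h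
  | cons a w ih =>
    rintro q hq ⟨q', hq', hacc⟩
    have hδ' : (q, a, q') ∈ δ := saturate_notP hpush hpop _ hq' hq
    exact ⟨q', hδ', ih (hδ _ hδ') hacc⟩

/-- key invariant of saturation. -/
lemma saturate_inv {P : Set Q} {push : Set (Q × Γ × Q × Γ × Γ)}
    {pop δ : Set (Q × Γ × Q)}
    (hpush : ∀ t ∈ push, t.1 ∈ P ∧ t.2.2.1 ∈ P)
    (hpop : ∀ t ∈ pop, t.1 ∈ P ∧ t.2.2 ∈ P)
    (hδ : ∀ t ∈ δ, t.2.2 ∉ P) :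
    ∀ t ∈ saturate push pop δ, ∀ w : List Γ, ∃ p u,
      Relation.ReflTransGen (PdsStep push pop) (t.1, t.2.1 :: w) (p, u ++ w) ∧
      PathP δ p u t.2.2 ∧ (t.1 ∈ P → p ∈ P) := by
  apply saturate_ind
  · rintro ⟨q, a, q'⟩ (ht | ht) w
    · exact ⟨q, [a], Relation.ReflTransGen.refl, ⟨q', ht, rfl⟩, fun h => h⟩
    · refine ⟨q', [], Relation.ReflTransGen.single ?_, PathP.refl q', fun _ => (hpop _ ht).2⟩
      exact Or.inr ⟨q, a, q', w, rfl, rfl, ht⟩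
  · rintro ⟨q, a, q3⟩ ⟨b, c, q1, q2, hrule, ⟨h1sat, h1inv⟩, ⟨h2sat, h2inv⟩⟩ w
    have hq1P : q1 ∈ P := (hpush _ hrule).2
    obtain ⟨p1, u1, hreach1, hpath1, hP1⟩ := h1inv (c :: w)
    have hp1P : p1 ∈ P := hP1 hq1P
    have step0 : PdsStep push pop (q, a :: w) (q1, b :: c :: w) :=
      Or.inl ⟨q, a, q1, b, c, w, rfl, rfl, hrule⟩
    cases u1 with
    | nil =>
      -- p1 = q2
      cases hpath1
      obtain ⟨p2, u2, hreach2, hpath2, hP2⟩ := h2inv w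
      refine ⟨p2, u2, ?_, hpath2, fun _ => hP2 hp1P⟩
      exact (Relation.ReflTransGen.head step0 hreach1).trans hreach2
    | cons x u1' =>
      have hq2notP : q2 ∉ P := PathP_last_notP hδ hpath1
      have hδ2 : (q2, c, q3) ∈ δ := saturate_notP hpush hpop _ h2sat hq2notP
      refine ⟨p1, (x :: u1') ++ [c], ?_, PathP_snoc hpath1 hδ2, fun _ => hp1P⟩
      have : ((x :: u1') ++ [c]) ++ w = (x :: u1') ++ (c :: w) := by simp
      rw [this]
      exact Relation.ReflTransGen.head step0 hreach1

/-- soundness of saturation. -/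
lemma saturate_sound {P : Set Q} {push : Set (Q × Γ × Q × Γ × Γ)}
    {pop δ : Set (Q × Γ × Q)} {F : Set Q}
    (hpush : ∀ t ∈ push, t.1 ∈ P ∧ t.2.2.1 ∈ P)
    (hpop : ∀ t ∈ pop, t.1 ∈ P ∧ t.2.2 ∈ P)
    (hδ : ∀ t ∈ δ, t.2.2 ∉ P) :
    ∀ {w : List Γ} {q : Q}, q ∈ P → Accepts (saturate push pop δ) F q w →
      ∃ c' : Q × List Γ, Relation.ReflTransGen (PdsStep push pop) (q, w) c' ∧
        c'.1 ∈ P ∧ Accepts δ F c'.1 c'.2 := by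
  intro w
  induction w with
  | nil => exact fun {q} hq hacc => ⟨(q, []), Relation.ReflTransGen.refl, hq, hacc⟩
  | cons a w ih =>
    rintro q hq ⟨q1, hq1, hacc⟩
    obtain ⟨p, u, hreach, hpath, hP⟩ := saturate_inv hpush hpop hδ _ hq1 w
    have hpP : p ∈ P := hP hq
    cases u with
    | nil =>
      cases hpath
      obtain ⟨c', hreach', hc'⟩ := ih hpP hacc
      exact ⟨c', hreach.trans hreach', hc'⟩
    | cons x u' =>
      have hq1notP : q1 ∉ P := PathP_last_notP hδ hpath
      have haccδ : Accepts δ F q1 w := accepts_saturate_notP hpush hpop hδ hq1notP hacc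
      exact ⟨(p, (x :: u') ++ w), hreach, hpP, PathP_accept hpath haccδ⟩

/-- completeness: acceptance in the saturated automaton is preserved backwards
along PDS steps. -/
lemma saturate_complete_step {push : Set (Q × Γ × Q × Γ × Γ)}
    {pop δ : Set (Q × Γ × Q)} {F : Set Q} {c c' : Q × List Γ}
    (h : PdsStep push pop c c')
    (hacc : Accepts (saturate push pop δ) F c'.1 c'.2) :
    Accepts (saturate push pop δ) F c.1 c.2 := by
  rcases h with ⟨q, a, q', b, cc, w, hc, hc', hrule⟩ | ⟨q, a, q', w, hc, hc', hrule⟩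
  · subst hc; subst hc'
    obtain ⟨q2, hq2, q3, hq3, hacc3⟩ := hacc
    exact ⟨q3, forced_saturate ⟨b, cc, q', q2, hrule, hq2, hq3⟩, hacc3⟩
  · subst hc; subst hc'
    exact ⟨q', subset_saturate (Or.inr hrule), hacc⟩

lemma saturate_complete {push : Set (Q × Γ × Q × Γ × Γ)}
    {pop δ : Set (Q × Γ × Q)} {F : Set Q} {c c' : Q × List Γ}
    (h : Relation.ReflTransGen (PdsStep push pop) c c')
    (hacc : Accepts δ F c'.1 c'.2) :
    Accepts (saturate push pop δ) F c.1 c.2 := by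
  induction h using Relation.ReflTransGen.head_induction_on with
  | refl => exact Accepts_mono (fun t ht => subset_saturate (Or.inl ht)) hacc
  | head hstep _ ih => exact saturate_complete_step hstep ih


/-- Preservation of regularity via saturation: the NFA obtained as the least
fixpoint of `δ' = δ ∪ pop ∪ forced δ'` recognizes exactly the backward
reachability set of the language of configurations recognized by the original
NFA. -/
theorem saturation_preserves_regularity
    (P : Set Q) (push : Set (Q × Γ × Q × Γ × Γ)) (pop : Set (Q × Γ × Q))
    (δ : Set (Q × Γ × Q)) (F : Set Q)
    (hpush : ∀ t ∈ push, t.1 ∈ P ∧ t.2.2.1 ∈ P)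
    (hpop : ∀ t ∈ pop, t.1 ∈ P ∧ t.2.2 ∈ P)
    (hδ : ∀ t ∈ δ, t.2.2 ∉ P) :
    {c : Q × List Γ | c.1 ∈ P ∧ Accepts (saturate push pop δ) F c.1 c.2} =
      {c : Q × List Γ | c.1 ∈ P ∧
        ∃ c' : Q × List Γ, Relation.ReflTransGen (PdsStep push pop) c c' ∧
          c'.1 ∈ P ∧ Accepts δ F c'.1 c'.2} := by
  ext ⟨q, w⟩
  simp only [Set.mem_setOf_eq]
  constructor
  · rintro ⟨hq, hacc⟩
    exact ⟨hq, saturate_sound hpush hpop hδ hq hacc⟩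
  · rintro ⟨hq, c', hreach, hc'P, hacc⟩
    exact ⟨hq, saturate_complete hreach hacc⟩
end
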